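/- J_G = L_G if and only if G is a complete multipartite graph with all parts of size at most 3. -/

import Mathlib

/-!
Evaluating at the indicator function of `{A, B}` kills `L_G` whenever `x_A x_B` is
not a monomial of a generator of `L_G`. If non-adjacency is not transitive, i.e. `w₁w₂` is the
only edge on some `{v, w₁, w₂}`, this separates `x_{vw₁}x_{w₂} - x_{vw₂}x_{w₁} ∈ J_G` from `L_G`;
for a stable set `{i, j, k, l}` it separates `x_{ij}x_{kl} - x_{ik}x_{jl}`.

Conversely, if `G` is complete multipartite, every stable set lies in one part. Take a
generator `x_{S₁}x_{S₂} - x_{S₃}x_{S₄}` of `J_G` and put `W = S₁ ⊔ S₂ = S₃ ⊔ S₄`. If `W` is not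
stable, it meets exactly two parts and both splittings are the split of `W` along them, so the
binomial is zero. If `W` is stable it has at most three elements, so in each splitting
`W = S ⊔ T` one of `S`, `T` is empty or a singleton, and `x_S x_T - x_W x_∅` is zero or a
generator of `L_G`.
-/

open MvPolynomial

section KempePrelim

variable {V : Type} 

/-- A proper `k`-coloring. -/
def IsColoring (G : SimpleGraph V) (k : ℕ) (f : V → Fin k) : Prop :=
  ∀ ⦃u v : V⦄, G.Adj u v → f u ≠ f v

/-- `g` is obtained from `f` by a Kempe switching: swap colors `i` and `j` on
one connected component of the subgraph induced on `f⁻¹(i) ∪ f⁻¹(j)`. -/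
def KempeSwitch (G : SimpleGraph V) {k : ℕ} (f g : V → Fin k) : Prop :=
  ∃ i j : Fin k, ∃ C : Set V,
    (∃ comp : (G.induce {v | f v = i ∨ f v = j}).ConnectedComponent,
      C = Subtype.val '' comp.supp) ∧
    (∀ v ∈ C, (f v = i → g v = j) ∧ (f v = j → g v = i)) ∧
    (∀ v ∉ C, g v = f v)

/-- A single step of Kempe equivalence between proper `k`-colorings. -/
def KempeStep (G : SimpleGraph V) {k : ℕ} (f g : V → Fin k) : Prop :=
  IsColoring G k f ∧ IsColoring G k g ∧ KempeSwitch G f g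

/-- Kempe equivalence of `k`-colorings. -/
def KempeEquiv (G : SimpleGraph V) {k : ℕ} (f g : V → Fin k) : Prop :=
  Relation.ReflTransGen (KempeStep G) f g

/-- The type of proper `k`-colorings of `G`. -/
def ProperColoring (G : SimpleGraph V) (k : ℕ) : Type _ :=
  {f : V → Fin k // IsColoring G k f}

/-- The number of Kempe classes of `k`-colorings of `G`. -/
noncomputable def Kc (G : SimpleGraph V) (k : ℕ) : ℕ :=
  Nat.card (Quot (fun f g : ProperColoring G k => KempeEquiv G f.1 g.1))

/-- The stable (independent) sets of `G`, as a type indexing variables. -/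
def StableSet (G : SimpleGraph V) : Type _ :=
  {s : Finset V // ∀ ⦃i⦄, i ∈ s → ∀ ⦃j⦄, j ∈ s → ¬ G.Adj i j}

def emptyStable (G : SimpleGraph V) : StableSet G :=
  ⟨∅, by intro i hi; simp at hi⟩

def singleStable (G : SimpleGraph V) (i : V) : StableSet G :=
  ⟨{i}, by
    intro a ha b hb
    simp only [Finset.mem_singleton] at ha hb
    rw [ha, hb]
    exact G.loopless.irrefl i⟩

def eraseStable (G : SimpleGraph V) [DecidableEq V] (S : StableSet G) (i : V) : StableSet G :=
  ⟨S.1.erase i, fun _ ha _ hb => S.2 (Finset.mem_of_mem_erase ha) (Finset.mem_of_mem_erase hb)⟩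

variable (K : Type) [Field K]

/-- The monoid algebra map `x_S ↦ t^{ρ(S)} s`, into `K[t₁,…,t_d,s]`
(realized as `MvPolynomial (Option V) K`, with `none` playing the role of `s`). -/
noncomputable def piMap (G : SimpleGraph V) :
    MvPolynomial (StableSet G) K →ₐ[K] MvPolynomial (Option V) K :=
  aeval fun S : StableSet G => (∏ i ∈ S.1, X (some i)) * X (none : Option V)

/-- The toric ideal `I_G` of the stable set ring. -/
noncomputable def toricIdeal (G : SimpleGraph V) : Ideal (MvPolynomial (StableSet G) K) :=
  RingHom.ker (piMap K G).toRingHom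

/-- The ideal `L_G`. -/
noncomputable def idealL (G : SimpleGraph V) [DecidableEq V] :
    Ideal (MvPolynomial (StableSet G) K) :=
  Ideal.span {p | ∃ (S : StableSet G) (i : V), i ∈ S.1 ∧ 2 ≤ S.1.card ∧
    p = X (eraseStable G S i) * X (singleStable G i) - X S * X (emptyStable G)}

/-- The 2-coloring ideal `J_G`. -/
noncomputable def idealJ (G : SimpleGraph V) [DecidableEq V] :
    Ideal (MvPolynomial (StableSet G) K) :=
  Ideal.span {p | ∃ S₁ S₂ S₃ S₄ : StableSet G,
    Disjoint S₁.1 S₂.1 ∧ Disjoint S₃.1 S₄.1 ∧ S₁.1 ∪ S₂.1 = S₃.1 ∪ S₄.1 ∧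
    p = X S₁ * X S₂ - X S₃ * X S₄}

/-- The ideal `⟨[I_G]₂⟩` generated by all quadratic binomials of `I_G`. -/
noncomputable def quadPart (G : SimpleGraph V) : Ideal (MvPolynomial (StableSet G) K) :=
  Ideal.span {p | (∃ S₁ S₂ S₃ S₄ : StableSet G, p = X S₁ * X S₂ - X S₃ * X S₄) ∧
    p ∈ toricIdeal K G}

/-- The monomial ideal `M_G`. -/
noncomputable def idealM (G : SimpleGraph V) [DecidableEq V] :
    Ideal (MvPolynomial (StableSet G) K) :=
  Ideal.span {p | ∃ S T : StableSet G, (S.1 ∩ T.1).Nonempty ∧ p = X S * X T}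

/-- The Kempe ideal `K_G = J_G + M_G`. -/
noncomputable def kempeIdeal (G : SimpleGraph V) [DecidableEq V] :
    Ideal (MvPolynomial (StableSet G) K) :=
  idealJ K G + idealM K G

/-- The color class of a proper coloring, as a stable set. -/
def colorClass (G : SimpleGraph V) [Fintype V] [DecidableEq V] {k : ℕ}
    (f : V → Fin k) (hf : IsColoring G k f) (c : Fin k) : StableSet G :=
  ⟨Finset.univ.filter (fun v => f v = c), by
    intro a ha b hb hadj
    simp only [Finset.mem_filter] at ha hb
    exact hf hadj (ha.2.trans hb.2.symm)⟩

/-- The monomial `x_f` associated with a proper `k`-coloring `f`. -/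
noncomputable def xMonomial (G : SimpleGraph V) [Fintype V] [DecidableEq V] {k : ℕ}
    (f : V → Fin k) (hf : IsColoring G k f) : MvPolynomial (StableSet G) K :=
  ∏ c : Fin k, X (colorClass G f hf c)

/-- The Hilbert function `k ↦ dim_K (R/I)_k` of a quotient of `R[G]`. -/
noncomputable def hilbertFn (G : SimpleGraph V)
    (I : Ideal (MvPolynomial (StableSet G) K)) (k : ℕ) : ℕ :=
  Module.finrank K (Submodule.map (Ideal.Quotient.mkₐ K I).toLinearMap
    (homogeneousSubmodule (StableSet G) K k))

end KempePrelim

open Finset SimpleGraph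

section StableSetRing

variable {V : Type} {G : SimpleGraph V} {K : Type} [Field K]

lemma isCompleteMultipartite_of_adj_iff_ne {ι : Type*} {P : V → ι}
    (hP : ∀ u v, G.Adj u v ↔ P u ≠ P v) : G.IsCompleteMultipartite :=
  ⟨fun u v w => by simpa only [hP, not_not] using Eq.trans⟩

lemma SimpleGraph.IsCompleteMultipartite.exists_adj_iff_ne [Fintype V]
    (hG : G.IsCompleteMultipartite) :
    ∃ (t : ℕ) (P : V → Fin t), ∀ u v, G.Adj u v ↔ P u ≠ P v := by
  classical
  refine ⟨_, Fintype.equivFin (Quotient hG.setoid) ∘ Quotient.mk _, fun u v => ?_⟩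
  rw [Function.comp_apply, Function.comp_apply, ne_eq, EmbeddingLike.apply_eq_iff_eq,
    Quotient.eq]
  exact not_not.symm

lemma StableSet.card_le_of_adj_iff_ne [Fintype V] {ι : Type*} [DecidableEq ι] {P : V → ι}
    (hP : ∀ u v, G.Adj u v ↔ P u ≠ P v) {n : ℕ} (hfib : ∀ c, #(univ.filter (P · = c)) ≤ n)
    (S : StableSet G) : #S.1 ≤ n := by
  rcases S.1.eq_empty_or_nonempty with hS | ⟨x, hx⟩
  · simp [hS]
  refine (card_le_card fun y hy => mem_filter.2 ⟨mem_univ y, ?_⟩).trans (hfib (P x))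
  by_contra hne
  exact S.2 hy hx ((hP y x).2 hne)

lemma StableSet.ne_of_mem_of_notMem {S T : StableSet G} {x : V} (hS : x ∈ S.1) (hT : x ∉ T.1) :
    S ≠ T :=
  fun h => hT (h ▸ hS)

lemma singleStable_ne_of_two_le_card {S : StableSet G} (hS : 2 ≤ #S.1) (i : V) :
    singleStable G i ≠ S := by
  rintro rfl
  simp [singleStable] at hS

lemma singleStable_injective : Function.Injective (singleStable G) :=
  fun _ _ h => singleton_injective (congrArg Subtype.val h)

variable [DecidableEq V]

def pairStable (G : SimpleGraph V) {x y : V} (h : ¬ G.Adj x y) : StableSet G :=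
  ⟨{x, y}, by
    simp only [mem_insert, mem_singleton]
    rintro i (rfl | rfl) j (rfl | rfl) <;> simp_all [G.adj_comm]⟩

lemma eraseStable_ne_singleStable (S : StableSet G) (i : V) :
    eraseStable G S i ≠ singleStable G i :=
  (StableSet.ne_of_mem_of_notMem (mem_singleton_self i) (notMem_erase i S.1)).symm

lemma X_mul_X_sub_X_mul_X_mem_idealJ {S₁ S₂ S₃ S₄ : StableSet G} (h₁₂ : Disjoint S₁.1 S₂.1)
    (h₃₄ : Disjoint S₃.1 S₄.1) (hU : S₁.1 ∪ S₂.1 = S₃.1 ∪ S₄.1) :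
    X S₁ * X S₂ - X S₃ * X S₄ ∈ idealJ K G :=
  Ideal.subset_span ⟨_, _, _, _, h₁₂, h₃₄, hU, rfl⟩

lemma idealL_le_idealJ : idealL K G ≤ idealJ K G := by
  rw [idealL, Ideal.span_le]
  rintro _ ⟨S, i, hi, -, rfl⟩
  exact X_mul_X_sub_X_mul_X_mem_idealJ (by simp [eraseStable, singleStable])
    (by simp [emptyStable]) (by simp [eraseStable, singleStable, emptyStable, hi])

lemma eval_eq_zero_of_mem_idealL (φ : StableSet G → K)
    (hφ : ∀ (S : StableSet G) (i : V), i ∈ S.1 → 2 ≤ #S.1 →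
      φ (eraseStable G S i) * φ (singleStable G i) = φ S * φ (emptyStable G))
    {p : MvPolynomial (StableSet G) K} (hp : p ∈ idealL K G) : eval φ p = 0 := by
  suffices idealL K G ≤ RingHom.ker (eval φ) from this hp
  rw [idealL, Ideal.span_le]
  rintro _ ⟨S, i, hi, hS, rfl⟩
  simp [hφ S i hi hS]

lemma X_mul_X_sub_X_mul_X_notMem_idealL {A B C D : StableSet G} (hA : A.1.Nonempty)
    (hB : B.1.Nonempty)
    (hAB : ∀ (S : StableSet G) (i : V), i ∈ S.1 → eraseStable G S i = A → singleStable G i ≠ B)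
    (hBA : ∀ (S : StableSet G) (i : V), i ∈ S.1 → eraseStable G S i = B → singleStable G i ≠ A)
    (hC : C ∉ ({A, B} : Set (StableSet G))) :
    X A * X B - X C * X D ∉ idealL K G := by
  set φ : StableSet G → K := Set.indicator {A, B} 1
  have hφ_empty : φ (emptyStable G) = 0 := by
    refine Set.indicator_of_notMem ?_ _
    rintro (rfl | rfl) <;> simp [emptyStable] at hA hB
  intro hmem
  have := eval_eq_zero_of_mem_idealL φ ?_ hmem
  · simp [φ, Set.indicator_of_notMem hC] at this
  · intro S i hi _
    rw [hφ_empty, mul_zero, mul_eq_zero]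
    by_contra! h
    obtain ⟨hE | hE, hI | hI⟩ := And.intro (Set.mem_of_indicator_ne_zero h.1)
      (Set.mem_of_indicator_ne_zero h.2)
    · exact eraseStable_ne_singleStable S i (hE.trans hI.symm)
    · exact hAB S i hi hE hI
    · exact hBA S i hi hE hI
    · exact eraseStable_ne_singleStable S i (hE.trans hI.symm)

lemma isCompleteMultipartite_of_idealJ_eq_idealL (h : idealJ K G = idealL K G) :
    G.IsCompleteMultipartite := by
  by_contra hG
  obtain ⟨v, w₁, w₂, hP3⟩ := exists_isPathGraph3Compl_of_not_isCompleteMultipartite hG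
  have hv₁ := hP3.ne_fst
  have hv₂ := hP3.ne_snd
  have h₁₂ := hP3.fst_ne_snd
  set A := pairStable G hP3.not_adj_fst
  set C := pairStable G hP3.not_adj_snd
  have hJ : X A * X (singleStable G w₂) - X C * X (singleStable G w₁) ∈ idealJ K G :=
    X_mul_X_sub_X_mul_X_mem_idealJ (by simp [A, pairStable, singleStable, hv₂.symm, h₁₂.symm])
      (by simp [C, pairStable, singleStable, hv₁.symm, h₁₂])
      (by ext; simp [A, C, pairStable, singleStable]; tauto)
  have hA : 2 ≤ #A.1 := (card_pair hv₁).ge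
  refine X_mul_X_sub_X_mul_X_notMem_idealL (by simp [A, pairStable])
    (by simp [singleStable]) (fun S i hiS hE hI => ?_)
    (fun _ i _ _ => singleStable_ne_of_two_le_card hA i) ?_ (h ▸ hJ)
  · obtain rfl : i = w₂ := singleStable_injective hI
    have hw₁ : w₁ ∈ (eraseStable G S i).1 := by simp [hE, A, pairStable]
    exact S.2 (mem_of_mem_erase hw₁) hiS hP3.adj
  · rintro (hCA | hCB)
    · exact StableSet.ne_of_mem_of_notMem (x := w₂) (by simp [C, pairStable])
        (by simp [A, pairStable, hv₂.symm, h₁₂.symm]) hCA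
    · exact singleStable_ne_of_two_le_card (card_pair hv₂).ge w₂ hCB.symm

lemma card_le_three_of_idealJ_eq_idealL (h : idealJ K G = idealL K G) (S : StableSet G) :
    #S.1 ≤ 3 := by
  by_contra! h4
  obtain ⟨f⟩ : Nonempty (Fin 4 ↪ S.1) :=
    Function.Embedding.nonempty_of_card_le (by simpa using Nat.succ_le_of_lt h4)
  set x : Fin 4 → V := fun n => f n
  have hx : Function.Injective x := Subtype.val_injective.comp f.injective
  have hxS (n : Fin 4) : x n ∈ S.1 := (f n).2
  have hne {m n : Fin 4} (hmn : m ≠ n) : x m ≠ x n := hx.ne hmn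
  set A := pairStable G (S.2 (hxS 0) (hxS 1))
  set B := pairStable G (S.2 (hxS 2) (hxS 3))
  set C := pairStable G (S.2 (hxS 0) (hxS 2))
  set D := pairStable G (S.2 (hxS 1) (hxS 3))
  have hJ : X A * X B - X C * X D ∈ idealJ K G :=
    X_mul_X_sub_X_mul_X_mem_idealJ (by simp [A, B, pairStable, hx.eq_iff])
      (by simp [C, D, pairStable, hx.eq_iff]) (by ext; simp [A, B, C, D, pairStable]; tauto)
  have hA : 2 ≤ #A.1 := (card_pair (hne (by decide))).ge
  have hB : 2 ≤ #B.1 := (card_pair (hne (by decide))).ge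
  refine X_mul_X_sub_X_mul_X_notMem_idealL (by simp [A, pairStable]) (by simp [B, pairStable])
    (fun _ i _ _ => singleStable_ne_of_two_le_card hB i)
    (fun _ i _ _ => singleStable_ne_of_two_le_card hA i) ?_ (h ▸ hJ)
  rintro (hCA | hCB)
  · exact StableSet.ne_of_mem_of_notMem (x := x 2) (by simp [C, pairStable])
      (by simp [A, pairStable, hx.eq_iff]) hCA
  · exact StableSet.ne_of_mem_of_notMem (x := x 0) (by simp [C, pairStable])
      (by simp [B, pairStable, hx.eq_iff]) hCB

lemma X_mul_X_singleStable_sub_mem_idealL {A W : StableSet G} {i : V} (hA : A.1.Nonempty)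
    (hi : i ∉ A.1) (hW : insert i A.1 = W.1) :
    X A * X (singleStable G i) - X W * X (emptyStable G) ∈ idealL K G := by
  have hWA : eraseStable G W i = A := Subtype.ext (by simp [eraseStable, ← hW, hi])
  have hW2 : 2 ≤ #W.1 := by
    rw [← hW, card_insert_of_notMem hi]
    exact Nat.succ_le_succ hA.card_pos
  exact Ideal.subset_span ⟨W, i, hW ▸ mem_insert_self i A.1, hW2, by rw [hWA]⟩

lemma X_mul_X_sub_X_mul_X_emptyStable_mem_idealL {A B W : StableSet G} (hAB : Disjoint A.1 B.1)
    (hW : A.1 ∪ B.1 = W.1) (hW3 : #W.1 ≤ 3) :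
    X A * X B - X W * X (emptyStable G) ∈ idealL K G := by
  rcases A.1.eq_empty_or_nonempty with hA | hA
  · obtain rfl : A = emptyStable G := Subtype.ext hA
    obtain rfl : B = W := Subtype.ext (by simpa [emptyStable] using hW)
    simp [mul_comm]
  rcases B.1.eq_empty_or_nonempty with hB | hB
  · obtain rfl : B = emptyStable G := Subtype.ext hB
    obtain rfl : A = W := Subtype.ext (by simpa [emptyStable] using hW)
    simp
  have hcard : #A.1 + #B.1 ≤ 3 := by rwa [← card_union_of_disjoint hAB, hW]
  rcases (show #A.1 = 1 ∨ #B.1 = 1 by have := hA.card_pos; have := hB.card_pos; omega)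
    with hA1 | hB1
  · obtain ⟨i, hi⟩ := card_eq_one.1 hA1
    obtain rfl : A = singleStable G i := Subtype.ext hi
    rw [mul_comm]
    exact X_mul_X_singleStable_sub_mem_idealL hB (disjoint_singleton_left.1 hAB)
      (by rw [← hW]; rfl)
  · obtain ⟨i, hi⟩ := card_eq_one.1 hB1
    obtain rfl : B = singleStable G i := Subtype.ext hi
    exact X_mul_X_singleStable_sub_mem_idealL hA (disjoint_singleton_right.1 hAB)
      (by rw [← hW, union_comm]; rfl)

section CompleteMultipartite

variable (hG : G.IsCompleteMultipartite)
include hG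

lemma mem_iff_of_not_stable {A B : StableSet G}
    (hW : ∃ x ∈ A.1 ∪ B.1, ∃ y ∈ A.1 ∪ B.1, G.Adj x y) {a : V} (ha : a ∈ A.1) (x : V) :
    x ∈ A.1 ↔ x ∈ A.1 ∪ B.1 ∧ ¬ G.Adj a x := by
  refine ⟨fun hx => ⟨mem_union_left _ hx, A.2 ha hx⟩, fun ⟨hxAB, hax⟩ => ?_⟩
  refine (mem_union.1 hxAB).resolve_right fun hxB => ?_
  have hna (y : V) (hy : y ∈ A.1 ∪ B.1) : ¬ G.Adj a y :=
    (mem_union.1 hy).elim (fun hyA => A.2 ha hyA) fun hyB => hG.trans _ _ _ hax (B.2 hxB hyB)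
  obtain ⟨y, hy, z, hz, hyz⟩ := hW
  exact hG.trans _ _ _ (by rw [G.adj_comm]; exact hna y hy) (hna z hz) hyz

lemma eq_and_eq_of_union_eq_of_not_stable {A B C D : StableSet G} (hAB : Disjoint A.1 B.1)
    (hCD : Disjoint C.1 D.1) (hU : A.1 ∪ B.1 = C.1 ∪ D.1)
    (hW : ∃ x ∈ A.1 ∪ B.1, ∃ y ∈ A.1 ∪ B.1, G.Adj x y) {a : V} (haA : a ∈ A.1)
    (haC : a ∈ C.1) : A = C ∧ B = D := by
  have hAC : A.1 = C.1 := by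
    ext x
    rw [mem_iff_of_not_stable hG hW haA, hU, ← mem_iff_of_not_stable hG (hU ▸ hW) haC]
  refine ⟨Subtype.ext hAC, Subtype.ext ?_⟩
  rw [← union_sdiff_cancel_left hAB, ← union_sdiff_cancel_left hCD, hU, hAC]

lemma eq_or_eq_swap_of_union_eq_of_not_stable {S₁ S₂ S₃ S₄ : StableSet G}
    (h₁₂ : Disjoint S₁.1 S₂.1) (h₃₄ : Disjoint S₃.1 S₄.1) (hU : S₁.1 ∪ S₂.1 = S₃.1 ∪ S₄.1)
    (hW : ∃ x ∈ S₁.1 ∪ S₂.1, ∃ y ∈ S₁.1 ∪ S₂.1, G.Adj x y) :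
    (S₁ = S₃ ∧ S₂ = S₄) ∨ (S₂ = S₃ ∧ S₁ = S₄) := by
  obtain ⟨c, hc⟩ : S₃.1.Nonempty := by
    refine nonempty_iff_ne_empty.2 fun h₃ => ?_
    obtain ⟨x, hx, y, hy, hxy⟩ := hW
    rw [hU, h₃, empty_union] at hx hy
    exact S₄.2 hx hy hxy
  rcases mem_union.1 (hU ▸ mem_union_left S₄.1 hc) with hc₁ | hc₂
  · exact .inl (eq_and_eq_of_union_eq_of_not_stable hG h₁₂ h₃₄ hU hW hc₁ hc)
  · rw [union_comm] at hU hW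
    exact .inr (eq_and_eq_of_union_eq_of_not_stable hG h₁₂.symm h₃₄ hU hW hc₂ hc)

theorem idealJ_le_idealL (h3 : ∀ S : StableSet G, #S.1 ≤ 3) : idealJ K G ≤ idealL K G := by
  rw [idealJ, Ideal.span_le]
  rintro _ ⟨S₁, S₂, S₃, S₄, h₁₂, h₃₄, hU, rfl⟩
  by_cases hW : ∀ x ∈ S₁.1 ∪ S₂.1, ∀ y ∈ S₁.1 ∪ S₂.1, ¬ G.Adj x y
  · set W : StableSet G := ⟨_, hW⟩
    have := sub_mem (X_mul_X_sub_X_mul_X_emptyStable_mem_idealL (K := K) h₁₂ rfl (h3 W))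
      (X_mul_X_sub_X_mul_X_emptyStable_mem_idealL h₃₄ hU.symm (h3 W))
    rwa [sub_sub_sub_cancel_right] at this
  · push Not at hW
    rcases eq_or_eq_swap_of_union_eq_of_not_stable hG h₁₂ h₃₄ hU hW with ⟨rfl, rfl⟩ | ⟨rfl, rfl⟩
    · simp
    · simp [mul_comm]

end CompleteMultipartite

end StableSetRing

theorem idealJ_eq_idealL_iff {d : ℕ} (G : SimpleGraph (Fin d))
    (K : Type) [Field K] :
    idealJ K G = idealL K G ↔
      ∃ (t : ℕ) (P : Fin d → Fin t),
        (∀ u v : Fin d, G.Adj u v ↔ P u ≠ P v) ∧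
        ∀ c : Fin t, (Finset.univ.filter (fun v => P v = c)).card ≤ 3 := by
  constructor
  · intro h
    obtain ⟨t, P, hP⟩ := (isCompleteMultipartite_of_idealJ_eq_idealL h).exists_adj_iff_ne
    refine ⟨t, P, hP, fun c => card_le_three_of_idealJ_eq_idealL h ⟨_, ?_⟩⟩
    intro u hu v hv
    rw [hP, not_not, (mem_filter.1 hu).2, (mem_filter.1 hv).2]
  · rintro ⟨t, P, hP, hfib⟩
    exact le_antisymm (idealJ_le_idealL (isCompleteMultipartite_of_adj_iff_ne hP)
      (StableSet.card_le_of_adj_iff_ne hP hfib)) idealL_le_idealJ
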